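/- Let $g_5(r_5) = \frac{4(r_5^2+1)^{3/2}(1 - r_5^3)}{(r_5^2+1)^{3/2} - 8r_5^3}$. Then $g_5(1) = 0$, $g_5(\sqrt{3}) = 4$, and for all $r_5 \in (1, \sqrt{3})$ we have $0 < g_5(r_5) < 4$. -/

import Mathlib

/-- `g5`, the value of `m3` for off-axis Euler-Lagrange points at `(0, r5)`. -/
noncomputable def g5 (r5 : ℝ) : ℝ :=
  4 * (r5^2 + 1) ^ ((3:ℝ)/2) * (1 - r5^3) / ((r5^2 + 1) ^ ((3:ℝ)/2) - 8*r5^3)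

/-- `g5 1 = 0`, `g5 √3 = 4`, and `0 < g5 r5 < 4` on `(1, √3)`. -/
theorem g5_range :
    g5 1 = 0 ∧ g5 (Real.sqrt 3) = 4 ∧
    ∀ r5 : ℝ, 1 < r5 → r5 < Real.sqrt 3 → (0 < g5 r5 ∧ g5 r5 < 4) := by
  refine ⟨by norm_num [g5], ?_, ?_⟩
  · have hs2 : Real.sqrt 3 ^ 2 = 3 := Real.sq_sqrt (by norm_num)
    have hs0 : (0:ℝ) ≤ Real.sqrt 3 := Real.sqrt_nonneg 3
    have hs1 : 1 < Real.sqrt 3 := by nlinarith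
    have h4 : ((4:ℝ)) ^ ((3:ℝ)/2) = 8 := by
      have h2 : (4:ℝ) = (2:ℝ) ^ (2:ℝ) := by
        rw [show (2:ℝ) = ((2:ℕ):ℝ) by norm_num, Real.rpow_natCast]; norm_num
      rw [h2, ← Real.rpow_mul (by norm_num : (0:ℝ) ≤ 2)]
      norm_num
    have ht : 1 < Real.sqrt 3 ^ 3 := by nlinarith
    rw [g5, hs2, show (3:ℝ)+1 = 4 by norm_num, h4, div_eq_iff (by nlinarith)]
    ring
  · intro r hr hr3
    have hs2 : Real.sqrt 3 ^ 2 = 3 := Real.sq_sqrt (by norm_num)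
    have hr2 : r ^ 2 < 3 := by nlinarith [Real.sqrt_nonneg 3]
    have hA : (0:ℝ) < r^2 + 1 := by positivity
    set P := (r^2 + 1) ^ ((3:ℝ)/2) with hPdef
    have hP0 : 0 < P := Real.rpow_pos_of_pos hA _
    have hP2 : P ^ 2 = (r^2 + 1) ^ 3 := by
      rw [hPdef, ← Real.rpow_natCast ((r^2+1) ^ ((3:ℝ)/2)) 2,
        ← Real.rpow_mul hA.le]
      norm_num
    have hr0 : (0:ℝ) < r := by linarith
    have hr31 : 1 < r^3 := by nlinarith
    -- P < 8 r^3 since P^2 = (r^2+1)^3 < 64 r^6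
    have hlt : P < 8 * r^3 := by
      have h1 : (r^2 + 1)^3 < 64 * r^6 := by nlinarith
      nlinarith [mul_pos hP0 hP0]
    -- P < 8 since (r^2+1)^3 < 64
    have hP8 : P < 8 := by
      have h1 : (r^2 + 1)^3 < 64 := by
        calc (r^2+1)^3 < 4^3 := by
              exact pow_lt_pow_left₀ (by linarith) hA.le (by norm_num)
          _ = 64 := by norm_num
      nlinarith
    constructor
    · rw [g5, div_pos_iff]
      right
      constructor <;> nlinarith
    · rw [g5, div_lt_iff_of_neg (by nlinarith)]
      nlinarith [mul_pos (by positivity : (0:ℝ) < r^3) (by linarith : (0:ℝ) < 8 - P)]
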